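/- arXiv:0710.0173 — 2 statements merged into one kernel-verified Lean document; each statement's English description precedes it below -/
import Mathlib

section
/- Let λ be a dominant position on an E-GCM graph with λ_j > 0 for some j ∈ I_n. If some game sequence from λ converges, then some game sequence from the fundamental position ω_j also converges. -/
/-- An E-generalized Cartan matrix (E-GCM) on a finite index type `ι`. -/
structure EGCM (ι : Type*) [Fintype ι] where
  /-- the matrix of amplitudes -/
  M : ι → ι → ℝ
  diag : ∀ i, M i i = 2
  offDiag_nonpos : ∀ i j, i ≠ j → M i j ≤ 0
  zero_iff : ∀ i j, M i j = 0 ↔ M j i = 0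
  prod_cond : ∀ i j, i ≠ j → M i j * M j i ≠ 0 →
    4 ≤ M i j * M j i ∨
      ∃ k : ℕ, 3 ≤ k ∧ M i j * M j i = 4 * Real.cos (Real.pi / k) ^ 2

namespace EGCM

variable {ι : Type*} [Fintype ι]

/-- Adjacency in the E-GCM graph. -/
def Adj (E : EGCM ι) (i j : ι) : Prop := i ≠ j ∧ E.M i j ≠ 0

/-- The underlying simple graph of an E-GCM graph. -/
def graph (E : EGCM ι) : SimpleGraph ι where
  Adj i j := i ≠ j ∧ E.M i j ≠ 0
  symm := by
    constructor
    intro i j ⟨h1, h2⟩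
    exact ⟨h1.symm, fun hz => h2 ((E.zero_iff j i).mp hz)⟩
  loopless := by constructor; intro i ⟨h, _⟩; exact h rfl

/-- The result of firing node `i` from position `lam`. -/
def fire (E : EGCM ι) (lam : ι → ℝ) (i : ι) : ι → ℝ := fun j => lam j - E.M i j * lam i

/-- The position resulting from firing the nodes in the list `s` in order. -/
def fireList (E : EGCM ι) (lam : ι → ℝ) : List ι → (ι → ℝ)
  | [] => lam
  | i :: s => fireList E (E.fire lam i) s

/-- The firing sequence `s` is legal from position `lam`: at each step the
fired node carries a positive number. -/
def Legal (E : EGCM ι) (lam : ι → ℝ) : List ι → Prop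
  | [] => True
  | i :: s => 0 < lam i ∧ Legal E (E.fire lam i) s

/-- A position with no positive entries. -/
def Terminal (lam : ι → ℝ) : Prop := ∀ i, lam i ≤ 0

/-- `s` is a (convergent) game sequence from `lam`: a legal firing sequence whose
resulting position has no positive entries. -/
def IsGameSeq (E : EGCM ι) (lam : ι → ℝ) (s : List ι) : Prop :=
  E.Legal lam s ∧ Terminal (E.fireList lam s)

/-- The position after `k` steps of the infinite firing sequence `f`. -/
def posAt (E : EGCM ι) (lam : ι → ℝ) (f : ℕ → ι) : ℕ → (ι → ℝ)
  | 0 => lam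
  | k + 1 => E.fire (posAt E lam f k) (f k)

/-- `f` is a divergent game sequence from `lam`: an infinite sequence of legal firings. -/
def DivergentSeq (E : EGCM ι) (lam : ι → ℝ) (f : ℕ → ι) : Prop :=
  ∀ k, 0 < E.posAt lam f k (f k)

/-- A dominant position: all numbers nonnegative. -/
def Dominant (lam : ι → ℝ) : Prop := ∀ i, 0 ≤ lam i

/-- A strongly dominant position: all numbers positive. -/
def StronglyDominant (lam : ι → ℝ) : Prop := ∀ i, 0 < lam i

/-- The E-GCM graph is admissible if some nonzero dominant position has a
convergent game sequence. -/
def Admissible (E : EGCM ι) : Prop :=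
  ∃ lam : ι → ℝ, Dominant lam ∧ lam ≠ 0 ∧ ∃ s : List ι, E.IsGameSeq lam s

/-- The E-GCM graph is strongly admissible if every nonzero dominant position has a
convergent game sequence. -/
def StronglyAdmissible (E : EGCM ι) : Prop :=
  ∀ lam : ι → ℝ, Dominant lam → lam ≠ 0 → ∃ s : List ι, E.IsGameSeq lam s

/-- A position is adjacency-free if no position reachable from it by a legal firing
sequence (i.e. no intermediate position of a game sequence) has positive numbers at
two adjacent nodes. -/
def AdjacencyFree (E : EGCM ι) (lam : ι → ℝ) : Prop :=
  ∀ s : List ι, E.Legal lam s →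
    ¬ ∃ i j, E.Adj i j ∧ 0 < E.fireList lam s i ∧ 0 < E.fireList lam s j

/-- A `J`-complement-dominant position: zero exactly at the nodes of `J`, positive elsewhere. -/
def JcDominant (J : Set ι) (lam : ι → ℝ) : Prop :=
  (∀ j ∈ J, lam j = 0) ∧ ∀ i ∉ J, 0 < lam i

open Classical in
/-- The Coxeter exponent `m i j` attached to the E-GCM: `m i j = k` if
`M i j * M j i = 4 cos²(π/k)` with `k ≥ 2`, and `m i j = 0` (representing `∞`)
if `M i j * M j i ≥ 4`. -/
noncomputable def m (E : EGCM ι) (i j : ι) : ℕ :=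
  if i = j then 1
  else if h : ∃ k : ℕ, 2 ≤ k ∧ E.M i j * E.M j i = 4 * Real.cos (Real.pi / k) ^ 2
    then Nat.find h else 0

theorem m_symm (E : EGCM ι) (i j : ι) : E.m i j = E.m j i := by
  unfold m
  rcases eq_or_ne i j with rfl | hij
  · simp
  · rw [if_neg hij, if_neg (Ne.symm hij)]
    by_cases h : ∃ k : ℕ, 2 ≤ k ∧ E.M i j * E.M j i = 4 * Real.cos (Real.pi / k) ^ 2
    · have h' : ∃ k : ℕ, 2 ≤ k ∧ E.M j i * E.M i j = 4 * Real.cos (Real.pi / k) ^ 2 := by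
        rw [mul_comm]; exact h
      rw [dif_pos h, dif_pos h']
      exact le_antisymm (Nat.find_mono fun n hn => by rwa [mul_comm (E.M i j)])
        (Nat.find_mono fun n hn => by rwa [mul_comm (E.M j i)])
    · have h' : ¬ ∃ k : ℕ, 2 ≤ k ∧ E.M j i * E.M i j = 4 * Real.cos (Real.pi / k) ^ 2 := by
        rw [mul_comm]; exact h
      rw [dif_neg h, dif_neg h']

theorem m_offDiag (E : EGCM ι) (i j : ι) (h : i ≠ j) : E.m i j ≠ 1 := by
  classical
  unfold m
  rw [if_neg h]
  split
  · rename_i hex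
    have := Nat.find_spec hex
    omega
  · omega

/-- The Coxeter matrix associated to the E-GCM. -/
noncomputable def cox (E : EGCM ι) : CoxeterMatrix ι where
  M := fun i j => E.m i j
  isSymm := by
    ext i j
    exact E.m_symm j i
  diagonal := by intro i; simp [m]
  off_diagonal := fun i j h => E.m_offDiag i j h

/-- The reflection `S i` of the geometric representation:
`S i v = v − 2 B(α i, v) • α i` where `B (α i, α j) = M i j / 2`. -/
noncomputable def S [DecidableEq ι] (E : EGCM ι) (i : ι) : Module.End ℝ (ι → ℝ) :=
  LinearMap.id -
    LinearMap.smulRight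
      ((∑ k, E.M i k • LinearMap.proj k : (ι → ℝ) →ₗ[ℝ] ℝ)) (Pi.single i 1)

end EGCM

section Roots

variable {ι : Type*} [Fintype ι] [DecidableEq ι]
variable {W : Type*} [Group W]

/-- `α` is a root for the geometric representation `σ`. -/
def IsRoot (σ : W →* Module.End ℝ (ι → ℝ)) (α : ι → ℝ) : Prop :=
  ∃ (w : W) (i : ι), σ w (Pi.single i 1) = α

/-- `α` is a positive root. -/
def IsPosRoot (σ : W →* Module.End ℝ (ι → ℝ)) (α : ι → ℝ) : Prop :=
  IsRoot σ α ∧ ∀ i, 0 ≤ α i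

/-- `α` is a negative root. -/
def IsNegRoot (σ : W →* Module.End ℝ (ι → ℝ)) (α : ι → ℝ) : Prop :=
  IsRoot σ α ∧ ∀ i, α i ≤ 0

/-- `N_M(w)`: the set of positive roots sent to negative roots by `w`. -/
def NM (σ : W →* Module.End ℝ (ι → ℝ)) (w : W) : Set (ι → ℝ) :=
  {α | IsPosRoot σ α ∧ IsNegRoot σ (σ w α)}

/-- `𝔖_M(α)`: the positive roots which are real multiples of `α`. -/
def Sfrak (σ : W →* Module.End ℝ (ι → ℝ)) (α : ι → ℝ) : Set (ι → ℝ) :=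
  {β | (∃ K : ℝ, β = K • α) ∧ IsPosRoot σ β}

end Roots

section Parabolic

variable {ι : Type*} {W : Type*} [Group W]

/-- The standard parabolic subgroup `W_J`. -/
def parabolic {M : CoxeterMatrix ι} (cs : CoxeterSystem M W) (J : Set ι) : Subgroup W :=
  Subgroup.closure (cs.simple '' J)

/-- The set `W^J` of minimal coset representatives. -/
def minReps {M : CoxeterMatrix ι} (cs : CoxeterSystem M W) (J : Set ι) : Set W :=
  {w | ∀ j ∈ J, cs.length w < cs.length (w * cs.simple j)}

end Parabolic

namespace EGCM

variable {ι : Type*} [Fintype ι]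

/-- The E-GCM subgraph induced on a subset `I` of the nodes. -/
def restrict (E : EGCM ι) (I : Finset ι) : EGCM {x // x ∈ I} where
  M i j := E.M i j
  diag i := E.diag i
  offDiag_nonpos i j h := E.offDiag_nonpos i j (fun hc => h (Subtype.ext hc))
  zero_iff i j := E.zero_iff i j
  prod_cond i j h := E.prod_cond i j (fun hc => h (Subtype.ext hc))

/-- Adjacent nodes `i`, `j` are odd-neighborly if `m i j` is odd. -/
def OddNeighborly (E : EGCM ι) (i j : ι) : Prop := E.Adj i j ∧ Odd (E.m i j)

/-- The factor `K_{j i} = −(M j i) / (2 cos (π / m i j))` attached to an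
odd-neighborly pair `(i, j)`. -/
noncomputable def Kfac (E : EGCM ι) (i j : ι) : ℝ :=
  -E.M j i / (2 * Real.cos (Real.pi / (E.m i j : ℝ)))

/-- `Π_P` for the ON-path `P` given by a list of nodes: the product of the factors
`K` along consecutive pairs. -/
noncomputable def piON (E : EGCM ι) : List ι → ℝ
  | [] => 1
  | [_] => 1
  | a :: b :: t => piON E (b :: t) * E.Kfac a b

/-- `y` can be reached from `x` by a path of odd neighbors. -/
def ONReach (E : EGCM ι) (x y : ι) : Prop :=
  ∃ l : List ι, l.Chain' E.OddNeighborly ∧ l.head? = some x ∧ l.getLast? = some y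

/-- The ON-connected component containing `x` is unital ON-cyclic: every ON-cycle
whose nodes lie in this component has `Π = 1`. -/
def UnitalONCyclicAt (E : EGCM ι) (x : ι) : Prop :=
  ∀ l : List ι, l ≠ [] → l.Chain' E.OddNeighborly → (∀ y ∈ l, E.ONReach x y) →
    l.head? = l.getLast? → E.piON l = 1

/-- The E-GCM graph has an odd asymmetry: an odd-neighborly pair `i`, `j` with
`M i j ≠ M j i`. -/
def HasOddAsymmetry (E : EGCM ι) : Prop :=
  ∃ i j, E.OddNeighborly i j ∧ E.M i j ≠ E.M j i

end EGCM

section FullComm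

variable {ι : Type*} [Fintype ι] {W : Type*} [Group W]

/-- An elementary simplification of commuting type: interchange adjacent letters
`x`, `y` with `m x y = 2`. -/
def CommMove (E : EGCM ι) (l l' : List ι) : Prop :=
  ∃ (u v : List ι) (x y : ι), E.m x y = 2 ∧ l = u ++ x :: y :: v ∧ l' = u ++ y :: x :: v

/-- `w` is fully commutative: any reduced word for `w` can be obtained from any other
by a sequence of elementary simplifications of commuting type. -/
def FullyCommutative (E : EGCM ι) {W : Type*} [Group W] (cs : CoxeterSystem E.cox W)
    (w : W) : Prop :=
  ∀ l l' : List ι,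
    cs.IsReduced l.reverse → cs.wordProd l.reverse = w →
    cs.IsReduced l'.reverse → cs.wordProd l'.reverse = w →
    Relation.ReflTransGen (CommMove E) l l'

end FullComm

/-- The Coxeter graph of a Coxeter matrix: an edge between `i ≠ j` iff `m i j ≠ 2`. -/
def coxGraph {ι : Type*} (cm : CoxeterMatrix ι) : SimpleGraph ι where
  Adj i j := i ≠ j ∧ cm i j ≠ 2
  symm := by
    constructor
    intro i j ⟨h1, h2⟩
    exact ⟨h1.symm, by rwa [cm.symmetric j i]⟩
  loopless := by constructor; intro i ⟨h, _⟩; exact h rfl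

/-- The E-GCM `E` has associated exponents given by the Coxeter matrix `cm`:
`M i j * M j i = 4 cos² (π / cm i j)` when `cm i j ≠ 0` and `M i j * M j i ≥ 4`
when `cm i j = 0` (representing `∞`), with `M i j = 0` iff `cm i j = 2`. -/
def Compat {ι : Type*} [Fintype ι] (E : EGCM ι) (cm : CoxeterMatrix ι) : Prop :=
  ∀ i j : ι, i ≠ j →
    (E.M i j = 0 ↔ cm i j = 2) ∧
    ((cm i j = 0 ∧ 4 ≤ E.M i j * E.M j i) ∨
      (cm i j ≠ 0 ∧ E.M i j * E.M j i = 4 * Real.cos (Real.pi / (cm i j : ℝ)) ^ 2))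

/-
Firing node `i` is dual to the reflection `S i` of the geometric representation `σ` of the Coxeter
group of the E-GCM: the number at node `z` after playing the word `u` from `p` is `p ⬝ σ(u) e_z`.
Every root `σ(w) e_z` is either nonnegative or nonpositive (the induction on length of
Humphreys §5.4, whose rank-two case is a Chebyshev computation). Hence each firing in a game from
`ω_j` fires a nonnegative root `β` with `β_j > 0`, so that `λ ⬝ β > 0`. If the game `s` from `λ`
converges, the terminal position `λ ∘ σ(s)` has no positive entry, and this forces every firing
from `ω_j` to shorten `(π s)⁻¹ π u` by one: every game from `ω_j` stops within `ℓ(π s)` moves.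
-/

open Real Polynomial

theorem Real.sin_pi_div_pos {m : ℕ} (hm : 2 ≤ m) : 0 < sin (π / m) := by
  have : (2 : ℝ) ≤ m := by exact_mod_cast hm
  apply sin_pos_of_pos_of_lt_pi (by positivity)
  rw [div_lt_iff₀ (by positivity)]
  nlinarith [pi_pos]

theorem Real.cos_pi_div_nonneg {m : ℕ} (hm : 2 ≤ m) : 0 ≤ cos (π / m) := by
  have : (2 : ℝ) ≤ m := by exact_mod_cast hm
  refine cos_nonneg_of_mem_Icc ⟨?_, div_le_div_of_nonneg_left pi_pos.le two_pos this⟩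
  linarith [pi_pos, div_pos pi_pos (by positivity : (0 : ℝ) < m)]

namespace Polynomial.Chebyshev

theorem S_eval_nonneg_of_two_le {c : ℝ} (hc : 2 ≤ c) {n : ℤ} (hn : -1 ≤ n) :
    0 ≤ (S ℝ n).eval c := by
  have key : ∀ k : ℕ, 0 ≤ (S ℝ (k - 1)).eval c ∧ (S ℝ (k - 1)).eval c ≤ (S ℝ k).eval c := by
    intro k
    induction k with
    | zero => simp
    | succ k ih =>
      push_cast
      rw [add_sub_cancel_right, S_add_one, eval_sub, eval_mul, eval_X]
      constructor <;> nlinarith [ih.1, ih.2]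
  obtain ⟨k, rfl⟩ : ∃ k : ℕ, n = k - 1 := ⟨(n + 1).toNat, by omega⟩
  exact (key k).1

theorem S_eval_two_mul_cos_pi_div_nonneg {m : ℕ} (hm : 2 ≤ m) {n : ℤ} (h₁ : -1 ≤ n)
    (h₂ : n + 1 ≤ m) : 0 ≤ (S ℝ n).eval (2 * cos (π / m)) := by
  refine nonneg_of_mul_nonneg_left ?_ (sin_pi_div_pos hm)
  rw [S_two_mul_real_cos]
  have h₁' : (0 : ℝ) ≤ n + 1 := by exact_mod_cast (by omega : (0 : ℤ) ≤ n + 1)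
  have h₂' : (n : ℝ) + 1 ≤ m := by exact_mod_cast h₂
  apply sin_nonneg_of_nonneg_of_le_pi (by positivity)
  calc (n + 1 : ℝ) * (π / m) ≤ m * (π / m) := by gcongr
    _ = π := by field_simp

theorem S_eval_two_mul_cos_pi_div_two_mul {m : ℕ} (hm : 2 ≤ m) :
    (S ℝ (2 * m)).eval (2 * cos (π / m)) = 1 := by
  refine mul_right_cancel₀ (sin_pi_div_pos hm).ne' ?_
  have : (m : ℝ) ≠ 0 := by positivity
  rw [S_two_mul_real_cos, one_mul,
    show ((2 * m : ℤ) + 1 : ℝ) * (π / m) = π / m + 2 * π by push_cast; field_simp; ring,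
    sin_add_two_pi]

theorem S_eval_two_mul_cos_pi_div_two_mul_sub_one {m : ℕ} (hm : 2 ≤ m) :
    (S ℝ (2 * m - 1)).eval (2 * cos (π / m)) = 0 := by
  refine mul_right_cancel₀ (sin_pi_div_pos hm).ne' ?_
  have : (m : ℝ) ≠ 0 := by positivity
  rw [S_two_mul_real_cos, zero_mul,
    show ((2 * m - 1 : ℤ) + 1 : ℝ) * (π / m) = 2 * π by push_cast; field_simp; ring, sin_two_pi]

end Polynomial.Chebyshev

namespace CoxeterSystem

variable {B W : Type*} [Group W] {M : CoxeterMatrix B} (cs : CoxeterSystem M W)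

theorem exists_eq_mul_wordProd_alternatingWord {w : W} {z : B} (t : B)
    (hz : ¬cs.IsRightDescent w z) :
    ∃ (v : W) (K : ℕ), w = v * cs.wordProd (alternatingWord z t K) ∧
      cs.length v + K = cs.length w ∧ ¬cs.IsRightDescent v z ∧ ¬cs.IsRightDescent v t := by
  obtain ⟨n, hn⟩ : ∃ n, cs.length w = n := ⟨_, rfl⟩
  induction n using Nat.strong_induction_on generalizing w z t with
  | _ n ih =>
    by_cases ht : cs.IsRightDescent w t
    · have hlen := cs.isRightDescent_iff.1 ht
      obtain ⟨v, K, hv, hK, hvt, hvz⟩ := ih _ (by omega) (w := w * cs.simple t) (z := t) z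
        (cs.isRightDescent_iff_not_isRightDescent_mul.1 ht) rfl
      refine ⟨v, K + 1, ?_, by omega, hvz, hvt⟩
      rw [alternatingWord_succ, wordProd_concat, ← mul_assoc, ← hv,
        simple_mul_simple_cancel_right]
    · exact ⟨w, 0, by simp [alternatingWord], by simp, hz, ht⟩

theorem eq_zero_or_lt_of_eq_mul_wordProd_alternatingWord {w v : W} {z t : B} {K : ℕ}
    (hz : ¬cs.IsRightDescent w z) (hw : w = v * cs.wordProd (alternatingWord z t K))
    (hK : cs.length v + K = cs.length w) : M z t = 0 ∨ K < M z t := by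
  by_contra! h
  have hred : cs.IsReduced (alternatingWord t z (K + 1)) := by
    have hle := cs.length_wordProd_le (alternatingWord t z (K + 1))
    have hmul : w * cs.simple z = v * cs.wordProd (alternatingWord t z (K + 1)) := by
      rw [alternatingWord_succ, wordProd_concat, hw, mul_assoc]
    have := cs.length_mul_le v (cs.wordProd (alternatingWord t z (K + 1)))
    rw [← hmul, cs.not_isRightDescent_iff.1 hz] at this
    rw [length_alternatingWord] at hle
    rw [IsReduced, length_alternatingWord]
    omega
  exact cs.not_isReduced_alternatingWord t z (by rw [M.symmetric]; exact h.1)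
    (by rw [M.symmetric]; omega) hred

end CoxeterSystem

namespace EGCM

variable {ι : Type*} [Fintype ι] (E : EGCM ι)

theorem cox_spec {i j : ι} (hij : i ≠ j) :
    (E.cox i j = 0 ∧ 4 ≤ E.M i j * E.M j i) ∨
      (2 ≤ E.cox i j ∧ E.M i j * E.M j i = 4 * cos (π / E.cox i j) ^ 2) := by
  change (E.m i j = 0 ∧ _) ∨ (2 ≤ E.m i j ∧ _ = 4 * cos (π / (E.m i j : ℕ)) ^ 2)
  unfold m
  rw [if_neg hij]
  split_ifs with h
  · exact Or.inr (Nat.find_spec h)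
  · have hM : E.M i j * E.M j i ≠ 0 := fun h0 => h ⟨2, le_rfl, by simp [h0]⟩
    rcases E.prod_cond i j hij hM with h4 | ⟨k, hk, hk'⟩
    · exact Or.inl ⟨rfl, h4⟩
    · exact absurd ⟨k, by omega, hk'⟩ h

-- `c` is `2 cos (π / m)` when `m = E.cox z t ≠ 0`, and `√(M z t * M t z) ≥ 2` when `m = ∞`.
theorem exists_dihedral_param {z t : ι} (hzt : z ≠ t) {K : ℕ}
    (hK : E.cox z t = 0 ∨ K < E.cox z t) :
    ∃ c : ℝ, c ^ 2 = E.M z t * E.M t z ∧ 0 ≤ c ∧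
      ∀ n : ℤ, -1 ≤ n → n ≤ K → 0 ≤ (Chebyshev.S ℝ n).eval c := by
  rcases E.cox_spec hzt with ⟨-, h4⟩ | ⟨hm, h⟩
  · have h2 : 2 ≤ √(E.M z t * E.M t z) := Real.le_sqrt_of_sq_le (by linarith)
    exact ⟨_, Real.sq_sqrt (by linarith), by positivity,
      fun n hn _ => Chebyshev.S_eval_nonneg_of_two_le h2 hn⟩
  · have hK' : K < E.cox z t := hK.resolve_left (by omega)
    exact ⟨2 * cos (π / E.cox z t), by rw [h]; ring, mul_nonneg two_pos.le (cos_pi_div_nonneg hm),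
      fun n h₁ h₂ => Chebyshev.S_eval_two_mul_cos_pi_div_nonneg hm h₁ (by omega)⟩

-- Rescaling `e t` by `d` symmetrizes the rank-two action, which then follows the Chebyshev
-- recurrence `S (n + 1) = c S n - S (n - 1)`.
theorem exists_dihedral_scale {z t : ι} (hzt : z ≠ t) {c : ℝ}
    (hc : c ^ 2 = E.M z t * E.M t z) (hc₀ : 0 ≤ c) :
    ∃ d, -E.M t z = d * c ∧ -E.M z t * d = c ∧ 0 ≤ d := by
  refine ⟨-E.M t z / c, ?_, ?_, div_nonneg (neg_nonneg.2 (E.offDiag_nonpos t z hzt.symm)) hc₀⟩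
  all_goals rcases hc₀.eq_or_lt with rfl | hc₀
  · have : E.M t z = 0 := by
      rcases mul_eq_zero.1 (by rw [← hc]; ring : E.M z t * E.M t z = 0) with h | h
      exacts [(E.zero_iff z t).1 h, h]
    simp [this]
  · field_simp
  · simp
  · field_simp
    linear_combination -hc

variable [DecidableEq ι]

theorem S_apply (i : ι) (v : ι → ℝ) : E.S i v = v - (E.M i ⬝ᵥ v) • Pi.single i 1 := by
  ext l
  simp [S, dotProduct]

theorem S_apply_of_dotProduct_eq_zero {i : ι} {v : ι → ℝ} (h : E.M i ⬝ᵥ v = 0) :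
    E.S i v = v := by
  rw [S_apply, h, zero_smul, sub_zero]

theorem S_single_self (i : ι) : E.S i (Pi.single i 1) = -Pi.single i 1 := by
  rw [S_apply, dotProduct_single, E.diag]
  module

theorem S_mul_self (i : ι) : E.S i * E.S i = 1 := by
  refine LinearMap.ext fun v => ?_
  have : E.M i ⬝ᵥ E.S i v = -(E.M i ⬝ᵥ v) := by
    rw [S_apply, dotProduct_sub, dotProduct_smul, dotProduct_single, E.diag, smul_eq_mul]
    ring
  rw [Module.End.mul_apply, S_apply E i (E.S i v), this, S_apply]
  simp

theorem fire_dotProduct (p v : ι → ℝ) (i : ι) : E.fire p i ⬝ᵥ v = p ⬝ᵥ E.S i v := by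
  have : E.fire p i = p - p i • E.M i := by
    ext k
    simp [fire, mul_comm]
  rw [this, S_apply, sub_dotProduct, dotProduct_sub, smul_dotProduct, dotProduct_smul,
    dotProduct_single, smul_eq_mul, smul_eq_mul, mul_one]
  ring

section Dihedral

variable {z t : ι}

theorem S_fst_apply_smul_add_smul (A B : ℝ) :
    E.S z (A • Pi.single z 1 + B • Pi.single t 1) =
      (-E.M z t * B - A) • Pi.single z 1 + B • Pi.single t 1 := by
  rw [S_apply, dotProduct_add, dotProduct_smul, dotProduct_smul, dotProduct_single,
    dotProduct_single, E.diag]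
  module

theorem S_snd_apply_smul_add_smul (A B : ℝ) :
    E.S t (A • Pi.single z 1 + B • Pi.single t 1) =
      A • Pi.single z 1 + (-E.M t z * A - B) • Pi.single t 1 := by
  rw [S_apply, dotProduct_add, dotProduct_smul, dotProduct_smul, dotProduct_single,
    dotProduct_single, E.diag]
  module

theorem S_mul_S_pow_apply_single {c d : ℝ} (hd : -E.M t z = d * c) (hc : -E.M z t * d = c)
    (i : ℕ) :
    ((E.S z * E.S t) ^ i) (Pi.single z 1) =
      (Chebyshev.S ℝ (2 * i)).eval c • Pi.single z 1 +
        (d * (Chebyshev.S ℝ (2 * i - 1)).eval c) • Pi.single t 1 := by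
  induction i with
  | zero => simp
  | succ i ih =>
    set x := (Chebyshev.S ℝ (2 * i)).eval c
    set y := (Chebyshev.S ℝ (2 * i - 1)).eval c
    have h₁ := Chebyshev.S_add_one ℝ (2 * i)
    have h₂ := Chebyshev.S_add_one ℝ (2 * i + 1)
    rw [add_sub_cancel_right] at h₂
    rw [pow_succ', Module.End.mul_apply, ih, Module.End.mul_apply, S_snd_apply_smul_add_smul,
      S_fst_apply_smul_add_smul]
    push_cast
    rw [show 2 * ((i : ℤ) + 1) = 2 * i + 1 + 1 by ring, add_sub_cancel_right, h₂, h₁]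
    simp only [eval_sub, eval_mul, eval_X]
    congr 2
    · linear_combination (c * x - y) * hc - E.M z t * x * hd
    · linear_combination x * hd

theorem exists_eq_smul_add_smul_add (hdet : E.M z t * E.M t z ≠ 4) (v : ι → ℝ) :
    ∃ (A B : ℝ) (w : ι → ℝ), v = A • Pi.single z 1 + B • Pi.single t 1 + w ∧
      E.M z ⬝ᵥ w = 0 ∧ E.M t ⬝ᵥ w = 0 := by
  have hdet' : 4 - E.M z t * E.M t z ≠ 0 := sub_ne_zero.2 hdet.symm
  set A := (2 * (E.M z ⬝ᵥ v) - E.M z t * (E.M t ⬝ᵥ v)) / (4 - E.M z t * E.M t z)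
  set B := (2 * (E.M t ⬝ᵥ v) - E.M t z * (E.M z ⬝ᵥ v)) / (4 - E.M z t * E.M t z)
  refine ⟨A, B, v - A • Pi.single z 1 - B • Pi.single t 1, by abel, ?_, ?_⟩ <;>
  · simp only [dotProduct_sub, dotProduct_smul, dotProduct_single, E.diag, smul_eq_mul, A, B]
    field_simp
    ring

theorem S_mul_S_pow_eq_one (hzt : z ≠ t) {m : ℕ} (hm : 2 ≤ m)
    (h : E.M z t * E.M t z = 4 * cos (π / m) ^ 2) : (E.S z * E.S t) ^ m = 1 := by
  set c := 2 * cos (π / m)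
  have hc : c ^ 2 = E.M z t * E.M t z := by rw [h]; ring
  have hc₀ : 0 ≤ c := mul_nonneg two_pos.le (cos_pi_div_nonneg hm)
  obtain ⟨d, hd, hd', -⟩ := E.exists_dihedral_scale hzt hc hc₀
  obtain ⟨d', he, he', -⟩ := E.exists_dihedral_scale hzt.symm (by rw [hc, mul_comm]) hc₀
  have hz : ((E.S z * E.S t) ^ m) (Pi.single z 1) = Pi.single z 1 := by
    rw [E.S_mul_S_pow_apply_single hd hd', Chebyshev.S_eval_two_mul_cos_pi_div_two_mul hm,
      Chebyshev.S_eval_two_mul_cos_pi_div_two_mul_sub_one hm]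
    simp
  have ht : ((E.S z * E.S t) ^ m) (Pi.single t 1) = Pi.single t 1 := by
    have ht' : ((E.S t * E.S z) ^ m) (Pi.single t 1) = Pi.single t 1 := by
      rw [E.S_mul_S_pow_apply_single he he', Chebyshev.S_eval_two_mul_cos_pi_div_two_mul hm,
        Chebyshev.S_eval_two_mul_cos_pi_div_two_mul_sub_one hm]
      simp
    have hinv : (E.S z * E.S t) * (E.S t * E.S z) = 1 := by
      rw [mul_assoc, ← mul_assoc (E.S t), S_mul_self, one_mul, S_mul_self]
    have hinv' : (E.S t * E.S z) * (E.S z * E.S t) = 1 := by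
      rw [mul_assoc, ← mul_assoc (E.S z), S_mul_self, one_mul, S_mul_self]
    calc ((E.S z * E.S t) ^ m) (Pi.single t 1)
        = ((E.S z * E.S t) ^ m * (E.S t * E.S z) ^ m) (Pi.single t 1) := by
          rw [Module.End.mul_apply, ht']
      _ = Pi.single t 1 := by
          rw [← (show Commute _ _ from hinv.trans hinv'.symm).mul_pow, hinv, one_pow,
            Module.End.one_apply]
  have hdet : E.M z t * E.M t z ≠ 4 := by
    rw [← hc]
    have := sin_sq_add_cos_sq (π / m)
    nlinarith [sin_pi_div_pos hm]
  refine LinearMap.ext fun v => ?_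
  obtain ⟨A, B, w, rfl, hwz, hwt⟩ := E.exists_eq_smul_add_smul_add hdet v
  have hw : ((E.S z * E.S t) ^ m) w = w := by
    rw [Module.End.pow_apply]
    exact Function.iterate_fixed (by rw [Module.End.mul_apply,
      E.S_apply_of_dotProduct_eq_zero hwt, E.S_apply_of_dotProduct_eq_zero hwz]) m
  simp [hz, ht, hw]

end Dihedral

theorem isLiftable_S : E.cox.IsLiftable E.S := by
  intro i j
  rcases eq_or_ne i j with rfl | hij
  · rw [E.cox.diagonal, pow_one, S_mul_self]
  · rcases E.cox_spec hij with ⟨h0, -⟩ | ⟨hm, h⟩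
    · rw [h0, pow_zero]
    · exact E.S_mul_S_pow_eq_one hij hm h

noncomputable def geomRep : E.cox.Group →* Module.End ℝ (ι → ℝ) :=
  E.cox.toCoxeterSystem.lift ⟨E.S, E.isLiftable_S⟩

@[simp]
theorem geomRep_simple (i : ι) : E.geomRep (E.cox.toCoxeterSystem.simple i) = E.S i :=
  CoxeterSystem.lift_apply_simple _ _ i

theorem exists_geomRep_alternatingWord_apply_single {z t : ι} (hzt : z ≠ t) {K : ℕ}
    (hK : E.cox z t = 0 ∨ K < E.cox z t) :
    ∃ A B : ℝ, 0 ≤ A ∧ 0 ≤ B ∧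
      E.geomRep (E.cox.toCoxeterSystem.wordProd (CoxeterSystem.alternatingWord z t K))
        (Pi.single z 1) = A • Pi.single z 1 + B • Pi.single t 1 := by
  obtain ⟨c, hc, hc₀, hS⟩ := E.exists_dihedral_param hzt hK
  obtain ⟨d, hd, hd', hd₀⟩ := E.exists_dihedral_scale hzt hc hc₀
  rw [CoxeterSystem.prod_alternatingWord_eq_mul_pow]
  obtain ⟨i, rfl | rfl⟩ := Nat.even_or_odd' K
  · refine ⟨_, _, hS (2 * i) (by omega) (by push_cast; omega),
      mul_nonneg hd₀ (hS (2 * i - 1) (by omega) (by push_cast; omega)), ?_⟩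
    rw [if_pos (even_two_mul i), one_mul, Nat.mul_div_cancel_left i two_pos, map_pow, map_mul,
      geomRep_simple, geomRep_simple, E.S_mul_S_pow_apply_single hd hd']
  · have h₁ := Chebyshev.S_add_one ℝ (2 * i)
    refine ⟨_, d * (Chebyshev.S ℝ (2 * i + 1)).eval c, hS (2 * i) (by omega) (by push_cast; omega),
      mul_nonneg hd₀ (hS (2 * i + 1) (by omega) (by push_cast; omega)), ?_⟩
    rw [if_neg (Nat.not_even_iff_odd.2 (odd_two_mul_add_one i)), map_mul, map_pow, map_mul,
      geomRep_simple, geomRep_simple, show (2 * i + 1) / 2 = i by omega, Module.End.mul_apply,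
      E.S_mul_S_pow_apply_single hd hd', S_snd_apply_smul_add_smul, h₁, eval_sub, eval_mul,
      eval_X]
    congr 2
    linear_combination (Chebyshev.S ℝ (2 * i)).eval c * hd

theorem geomRep_apply_single_nonneg {w : E.cox.Group} {z : ι}
    (hz : ¬E.cox.toCoxeterSystem.IsRightDescent w z) : 0 ≤ E.geomRep w (Pi.single z 1) := by
  set cs := E.cox.toCoxeterSystem
  obtain ⟨n, hn⟩ : ∃ n, cs.length w = n := ⟨_, rfl⟩
  induction n using Nat.strong_induction_on generalizing w z with
  | _ n ih =>
    rcases eq_or_ne w 1 with rfl | hw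
    · simp [Pi.single_nonneg]
    obtain ⟨t, ht⟩ := cs.exists_rightDescent_of_ne_one hw
    have hzt : z ≠ t := by rintro rfl; exact hz ht
    obtain ⟨v, K, rfl, hK, hvz, hvt⟩ := cs.exists_eq_mul_wordProd_alternatingWord t hz
    have hK₀ : K ≠ 0 := by
      rintro rfl
      simp only [CoxeterSystem.alternatingWord, CoxeterSystem.wordProd_nil, mul_one] at ht
      exact hvt ht
    obtain ⟨A, B, hA, hB, hAB⟩ := E.exists_geomRep_alternatingWord_apply_single hzt
      (cs.eq_zero_or_lt_of_eq_mul_wordProd_alternatingWord hz rfl hK)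
    rw [map_mul, Module.End.mul_apply, hAB, map_add, map_smul, map_smul]
    exact add_nonneg (smul_nonneg hA (ih _ (by omega) hvz rfl))
      (smul_nonneg hB (ih _ (by omega) hvt rfl))

theorem geomRep_apply_single_nonneg_or_nonpos (w : E.cox.Group) (z : ι) :
    0 ≤ E.geomRep w (Pi.single z 1) ∨ E.geomRep w (Pi.single z 1) ≤ 0 := by
  by_cases hz : E.cox.toCoxeterSystem.IsRightDescent w z
  · right
    have h := E.geomRep_apply_single_nonneg
      (E.cox.toCoxeterSystem.isRightDescent_iff_not_isRightDescent_mul.1 hz)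
    rwa [map_mul, Module.End.mul_apply, geomRep_simple, S_single_self, map_neg,
      neg_nonneg] at h
  · exact Or.inl (E.geomRep_apply_single_nonneg hz)

theorem fireList_dotProduct (p : ι → ℝ) (u : List ι) (v : ι → ℝ) :
    E.fireList p u ⬝ᵥ v = p ⬝ᵥ E.geomRep (E.cox.toCoxeterSystem.wordProd u) v := by
  induction u generalizing p with
  | nil => simp [fireList]
  | cons i u ih =>
    rw [fireList, ih, fire_dotProduct, CoxeterSystem.wordProd_cons, map_mul, geomRep_simple,
      Module.End.mul_apply]

theorem fireList_single_apply (j : ι) (u : List ι) (z : ι) :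
    E.fireList (Pi.single j 1) u z =
      E.geomRep (E.cox.toCoxeterSystem.wordProd u) (Pi.single z 1) j := by
  simpa using E.fireList_dotProduct (Pi.single j 1) u (Pi.single z 1)

omit [DecidableEq ι] in
theorem legal_append_singleton (p : ι → ℝ) (u : List ι) (i : ι) :
    E.Legal p (u ++ [i]) ↔ E.Legal p u ∧ 0 < E.fireList p u i := by
  induction u generalizing p with
  | nil => simp [Legal, fireList]
  | cons k u ih => simp only [List.cons_append, Legal, ih, fireList, and_assoc]

omit [DecidableEq ι] in
theorem exists_isGameSeq_of_length_le {p : ι → ℝ} {N : ℕ}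
    (h : ∀ u, E.Legal p u → u.length ≤ N) : ∃ s, E.IsGameSeq p s := by
  by_contra! hno
  have : ∀ n, ∃ u, E.Legal p u ∧ u.length = n := by
    intro n
    induction n with
    | zero => exact ⟨[], trivial, rfl⟩
    | succ n ih =>
      obtain ⟨u, hu, rfl⟩ := ih
      obtain ⟨i, hi⟩ : ∃ i, 0 < E.fireList p u i := by
        simpa [Terminal] using fun ht => hno u ⟨hu, ht⟩
      exact ⟨u ++ [i], (E.legal_append_singleton p u i).2 ⟨hu, hi⟩, by simp⟩
  obtain ⟨u, hu, hlen⟩ := this (N + 1)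
  have := h u hu
  omega

theorem dotProduct_geomRep_apply_single_pos {lam : ι → ℝ} (hdom : Dominant lam) {j : ι}
    (hj : 0 < lam j) {g : E.cox.Group} {z : ι} (h : 0 < E.geomRep g (Pi.single z 1) j) :
    0 < lam ⬝ᵥ E.geomRep g (Pi.single z 1) := by
  rcases E.geomRep_apply_single_nonneg_or_nonpos g z with hβ | hβ
  · exact Finset.sum_pos' (fun k _ => mul_nonneg (hdom k) (hβ k))
      ⟨j, Finset.mem_univ j, mul_pos hj h⟩
  · exact absurd (hβ j) h.not_ge

theorem isRightDescent_of_isGameSeq {lam : ι → ℝ} {s : List ι} (hs : E.IsGameSeq lam s)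
    {g : E.cox.Group} {z : ι} (h : 0 < lam ⬝ᵥ E.geomRep g (Pi.single z 1)) :
    E.cox.toCoxeterSystem.IsRightDescent ((E.cox.toCoxeterSystem.wordProd s)⁻¹ * g) z := by
  by_contra hz
  have hγ := E.geomRep_apply_single_nonneg hz
  have hle : E.fireList lam s ⬝ᵥ E.geomRep ((E.cox.toCoxeterSystem.wordProd s)⁻¹ * g)
      (Pi.single z 1) ≤ 0 :=
    Finset.sum_nonpos fun k _ => mul_nonpos_of_nonpos_of_nonneg (hs.2 k) (hγ k)
  rw [fireList_dotProduct, ← Module.End.mul_apply, ← map_mul, mul_inv_cancel_left] at hle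
  exact hle.not_gt h

theorem length_add_length_le_of_legal {lam : ι → ℝ} (hdom : Dominant lam) {j : ι}
    (hj : 0 < lam j) {s : List ι} (hs : E.IsGameSeq lam s) {u : List ι}
    (hu : E.Legal (Pi.single j 1) u) :
    E.cox.toCoxeterSystem.length
        ((E.cox.toCoxeterSystem.wordProd s)⁻¹ * E.cox.toCoxeterSystem.wordProd u) + u.length ≤
      E.cox.toCoxeterSystem.length (E.cox.toCoxeterSystem.wordProd s)⁻¹ := by
  induction u using List.reverseRecOn with
  | nil => simp
  | append_singleton u z ih =>
    rw [E.legal_append_singleton, fireList_single_apply] at hu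
    have hdesc := (CoxeterSystem.isRightDescent_iff _).1
      (E.isRightDescent_of_isGameSeq hs (E.dotProduct_geomRep_apply_single_pos hdom hj hu.2))
    rw [CoxeterSystem.wordProd_append, CoxeterSystem.wordProd_singleton, ← mul_assoc,
      List.length_append, List.length_singleton]
    have := ih hu.1
    omega

end EGCM

/-- **Lemma 2.4.** If a dominant position `lam` with `lam j > 0` has a convergent game
sequence, then the fundamental position `ω_j` has a convergent game sequence. -/
theorem egcm_fundamental_converges {ι : Type*} [Fintype ι] [DecidableEq ι] (E : EGCM ι)
    (lam : ι → ℝ) (hdom : EGCM.Dominant lam) (j : ι) (hj : 0 < lam j)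
    (hconv : ∃ s : List ι, E.IsGameSeq lam s) :
    ∃ s : List ι, E.IsGameSeq (Pi.single j 1) s := by
  obtain ⟨s, hs⟩ := hconv
  exact E.exists_isGameSeq_of_length_le fun u hu =>
    (Nat.le_add_left _ _).trans (E.length_add_length_le_of_legal hdom hj hs hu)
end

section
/- If a connected E-GCM graph is admissible, then any connected E-GCM subgraph of it is also admissible. -/
/-!
Eriksson's strong convergence theorem: once one game sequence from a position converges, every
legal play from it extends to a convergent game sequence of that same length. The local
ingredient is the polygon property of two adjacent positive nodes `i`, `j`. If
`M i j * M j i ≥ 4`, a linear potential never decreases, so no game sequence converges. If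
`M i j * M j i = 4 cos² (π / m)`, firing `i` and `j` alternately acts, in rescaled coordinates,
by a linear map conjugate to the rotation by `π / m`; its `m`-th power is `-1`, so the two
alternating plays of length `m` are legal and end in the same position.

For the subgraph on `I`, fire along a path from a positive node until some node of `I` is
positive; this only raises the values on `I`. Legal plays of the subgraph from the resulting
position are legal plays of the whole graph, so their lengths are bounded, and firing greedily
inside `I` converges.
-/

open Real

/-- Firing one of two adjacent nodes, in the coordinates (node to fire next, other node) with
the value at `i` rescaled by `√(-M i j)`; here `2 c = √(M i j * M j i)`. -/
def dihedralStep (c : ℝ) (v : ℝ × ℝ) : ℝ × ℝ := (v.2 + 2 * c * v.1, -v.1)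

theorem sin_mul_dihedralStep_iterate (θ : ℝ) (v : ℝ × ℝ) (t : ℕ) :
    sin θ * ((dihedralStep (cos θ))^[t] v).1 = sin ((t + 1) * θ) * v.1 + sin (t * θ) * v.2 ∧
    sin θ * ((dihedralStep (cos θ))^[t] v).2 = -(sin (t * θ) * v.1 + sin ((t - 1) * θ) * v.2) := by
  have hrec : ∀ x : ℝ, sin ((x + 1) * θ) = 2 * cos θ * sin (x * θ) - sin ((x - 1) * θ) := by
    intro x
    rw [add_mul, sub_mul, one_mul, sin_add, sin_sub]
    ring
  induction t with
  | zero => simp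
  | succ t ih =>
    rw [Function.iterate_succ_apply']
    simp only [dihedralStep, Nat.cast_succ, add_sub_cancel_right]
    have h := hrec (t + 1)
    rw [add_sub_cancel_right] at h
    constructor
    · linear_combination ih.2 + 2 * cos θ * ih.1 - v.1 * h - v.2 * hrec t
    · linear_combination -ih.1

theorem dihedralStep_iterate_self {m : ℕ} (hm : 2 ≤ m) (v : ℝ × ℝ) :
    (dihedralStep (cos (π / m)))^[m] v = -v := by
  have hm0 : (0 : ℝ) < m := by positivity
  have hmθ : (m : ℝ) * (π / m) = π := by field_simp
  have hsin : sin (π / m) ≠ 0 := by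
    refine (sin_pos_of_pos_of_lt_pi (by positivity) ?_).ne'
    rw [div_lt_iff₀ hm0]
    nlinarith [pi_pos, show (2 : ℝ) ≤ m by exact_mod_cast hm]
  obtain ⟨h1, h2⟩ := sin_mul_dihedralStep_iterate (π / m) v m
  rw [add_mul, one_mul, hmθ, add_comm π, sin_add_pi, sin_pi] at h1
  rw [sub_mul, one_mul, hmθ, sin_pi_sub, sin_pi] at h2
  refine Prod.ext (mul_left_cancel₀ hsin ?_) (mul_left_cancel₀ hsin ?_)
  · rw [h1, Prod.fst_neg]; ring
  · rw [h2, Prod.snd_neg]; ring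

theorem dihedralStep_iterate_fst_pos {m k : ℕ} (hk : k < m) {v : ℝ × ℝ}
    (h1 : 0 < v.1) (h2 : 0 < v.2) : 0 < ((dihedralStep (cos (π / m)))^[k] v).1 := by
  rcases Nat.eq_zero_or_pos k with rfl | hk0
  · exact h1
  have hm0 : (0 : ℝ) < m := by exact_mod_cast hk0.trans hk
  have hmul : ∀ x : ℝ, x * (π / m) < π ↔ x < m := fun x => by
    rw [← mul_div_assoc, div_lt_iff₀ hm0, mul_comm x, mul_lt_mul_iff_right₀ pi_pos]
  have hsinθ : 0 < sin (π / m) := sin_pos_of_pos_of_lt_pi (by positivity)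
    (by simpa using (hmul 1).2 (by exact_mod_cast (by omega : 1 < m)))
  have hsink : 0 < sin (k * (π / m)) :=
    sin_pos_of_pos_of_lt_pi (by positivity) ((hmul k).2 (by exact_mod_cast hk))
  have hsink1 : 0 ≤ sin ((k + 1) * (π / m)) := by
    refine sin_nonneg_of_nonneg_of_le_pi (by positivity) ?_
    rw [← mul_div_assoc, div_le_iff₀ hm0, mul_comm _ π]
    exact mul_le_mul_of_nonneg_left (by exact_mod_cast hk) pi_pos.le
  have key := (sin_mul_dihedralStep_iterate (π / m) v k).1
  refine pos_of_mul_pos_right (key ▸ ?_) hsinθ.le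
  nlinarith [mul_nonneg hsink1 h1.le, mul_pos hsink h2]

section Alternating

variable {α : Type*}

def alternating : ℕ → α → α → List α
  | 0, _, _ => []
  | t + 1, i, j => i :: alternating t j i

@[simp]
theorem length_alternating : ∀ (t : ℕ) (i j : α), (alternating t i j).length = t
  | 0, _, _ => rfl
  | t + 1, _, _ => congrArg (· + 1) (length_alternating t _ _)

theorem mem_alternating {x : α} : ∀ {t : ℕ} {i j : α}, x ∈ alternating t i j → x = i ∨ x = j
  | t + 1, i, j, hx => by
    rcases List.mem_cons.1 hx with rfl | hx
    · exact .inl rfl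
    · exact (mem_alternating hx).symm

end Alternating

namespace EGCM

variable {ι : Type*} [Fintype ι] (E : EGCM ι) {p : ι → ℝ} {i j : ι}

theorem fireList_append (p : ι → ℝ) (u v : List ι) :
    E.fireList p (u ++ v) = E.fireList (E.fireList p u) v := by
  induction u generalizing p with
  | nil => rfl
  | cons x u ih => exact ih _

theorem legal_append (p : ι → ℝ) (u v : List ι) :
    E.Legal p (u ++ v) ↔ E.Legal p u ∧ E.Legal (E.fireList p u) v := by
  induction u generalizing p with
  | nil => simp [Legal, fireList]
  | cons x u ih => simp only [List.cons_append, Legal, fireList, ih, and_assoc]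

theorem isGameSeq_cons {s : List ι} :
    E.IsGameSeq p (i :: s) ↔ 0 < p i ∧ E.IsGameSeq (E.fire p i) s :=
  and_assoc

theorem isGameSeq_append {u v : List ι} :
    E.IsGameSeq p (u ++ v) ↔ E.Legal p u ∧ E.IsGameSeq (E.fireList p u) v := by
  simp only [IsGameSeq, legal_append, fireList_append, and_assoc]

theorem le_fire {k : ι} (hi : 0 ≤ p i) (hik : i ≠ k) : p k ≤ E.fire p i k := by
  have := E.offDiag_nonpos i k hik
  simp only [fire]
  nlinarith

theorem le_fireList {w : List ι} {k : ι} (hw : E.Legal p w) (hk : k ∉ w) :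
    p k ≤ E.fireList p w k := by
  induction w generalizing p with
  | nil => exact le_rfl
  | cons x w ih =>
    rw [List.mem_cons, not_or] at hk
    exact (E.le_fire hw.1.le (Ne.symm hk.1)).trans (ih hw.2 hk.2)

theorem heavy_potential_le_fireList (hij : i ≠ j) (h4 : 4 ≤ E.M i j * E.M j i)
    {s : List ι} (hs : E.Legal p s) :
    -E.M i j * p i + 2 * p j ≤ -E.M i j * E.fireList p s i + 2 * E.fireList p s j := by
  induction s generalizing p with
  | nil => exact le_rfl
  | cons x s ih =>
    refine le_trans ?_ (ih hs.2)
    have hx := hs.1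
    have hMij := E.offDiag_nonpos i j hij
    simp only [fire]
    rcases eq_or_ne x i with rfl | hxi
    · rw [E.diag]; nlinarith
    rcases eq_or_ne x j with rfl | hxj
    · rw [E.diag]; nlinarith
    nlinarith [E.offDiag_nonpos x i hxi, E.offDiag_nonpos x j hxj,
      mul_nonneg (mul_nonneg (neg_nonneg.2 hMij) (neg_nonneg.2 (E.offDiag_nonpos x i hxi))) hx.le]

theorem not_isGameSeq_of_heavy (hij : i ≠ j) (h4 : 4 ≤ E.M i j * E.M j i)
    (hpi : 0 ≤ p i) (hpj : 0 < p j) (s : List ι) : ¬ E.IsGameSeq p s := by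
  rintro ⟨hs, hterm⟩
  have hu : 0 ≤ -E.M i j := neg_nonneg.2 (E.offDiag_nonpos i j hij)
  have := E.heavy_potential_le_fireList hij h4 hs
  nlinarith [hterm i, hterm j, mul_nonneg hu hpi, mul_nonneg hu (neg_nonneg.2 (hterm i))]

theorem exists_fireList_eq_of_forall_mem {w : List ι} (hw : ∀ x ∈ w, x = i ∨ x = j) :
    ∃ a b : ℝ, ∀ k, E.fireList p w k = p k - a * E.M i k - b * E.M j k := by
  induction w generalizing p with
  | nil => exact ⟨0, 0, fun k => by simp [fireList]⟩
  | cons x w ih =>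
    obtain ⟨a, b, h⟩ := ih (p := E.fire p x) fun y hy => hw y (List.mem_cons_of_mem x hy)
    rcases hw x List.mem_cons_self with rfl | rfl
    · exact ⟨a + p x, b, fun k => by rw [fireList, h, fire]; ring⟩
    · exact ⟨a, b + p x, fun k => by rw [fireList, h, fire]; ring⟩

theorem fireList_eq_of_eq_on_edge (h4 : E.M i j * E.M j i ≠ 4) {w w' : List ι}
    (hw : ∀ x ∈ w, x = i ∨ x = j) (hw' : ∀ x ∈ w', x = i ∨ x = j)
    (hi : E.fireList p w i = E.fireList p w' i) (hj : E.fireList p w j = E.fireList p w' j) :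
    E.fireList p w = E.fireList p w' := by
  obtain ⟨a, b, h⟩ := E.exists_fireList_eq_of_forall_mem hw
  obtain ⟨a', b', h'⟩ := E.exists_fireList_eq_of_forall_mem hw'
  rw [h, h', E.diag] at hi hj
  have ha : (4 - E.M i j * E.M j i) * (a - a') = 0 := by
    linear_combination (-2) * hi + E.M j i * hj
  have ha' : a = a' := sub_eq_zero.1 ((mul_eq_zero.1 ha).resolve_left (sub_ne_zero.2 h4.symm))
  have hb : b = b' := by
    subst ha'
    have : 2 * (b - b') = 0 := by linear_combination -hj
    linarith
  funext k
  rw [h, h', ha', hb]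

noncomputable def scaledVal (p : ι → ℝ) (i j : ι) : ℝ := √(-E.M i j) * p i

theorem scaledVal_fire (hij : i ≠ j) {c : ℝ} (hc : √(-E.M i j) * √(-E.M j i) = 2 * c) :
    (E.scaledVal (E.fire p i) j i, E.scaledVal (E.fire p i) i j) =
      dihedralStep c (E.scaledVal p i j, E.scaledVal p j i) := by
  have hsq := Real.mul_self_sqrt (neg_nonneg.2 (E.offDiag_nonpos i j hij))
  simp only [scaledVal, fire, dihedralStep, E.diag, Prod.mk.injEq]
  constructor
  · linear_combination (√(-E.M i j) * p i) * hc - (√(-E.M j i) * p i) * hsq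
  · ring

theorem legal_alternating_and_scaledVal_fireList (c : ℝ) :
    ∀ (t : ℕ) (p : ι → ℝ) (i j : ι), i ≠ j → √(-E.M i j) * √(-E.M j i) = 2 * c →
    (∀ k < t, 0 < ((dihedralStep c)^[k] (E.scaledVal p i j, E.scaledVal p j i)).1) →
    E.Legal p (alternating t i j) ∧
      (E.scaledVal (E.fireList p (alternating t i j)) i j,
          E.scaledVal (E.fireList p (alternating t i j)) j i) =
        (if Even t then id else Prod.swap)
          ((dihedralStep c)^[t] (E.scaledVal p i j, E.scaledVal p j i))
  | 0, _, _, _, _, _, _ => ⟨trivial, by simp [alternating, fireList]⟩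
  | t + 1, p, i, j, hij, hc, hpos => by
    have hstep := E.scaledVal_fire (p := p) hij hc
    obtain ⟨hL, hV⟩ := legal_alternating_and_scaledVal_fireList c t (E.fire p i) j i hij.symm
      (by rwa [mul_comm]) fun k hk => by
        simpa [hstep, Function.iterate_succ_apply] using hpos (k + 1) (by omega)
    have hpi : 0 < p i :=
      pos_of_mul_pos_right (hpos 0 (by omega)) (Real.sqrt_nonneg _)
    refine ⟨⟨hpi, hL⟩, ?_⟩
    rw [Function.iterate_succ_apply, ← hstep]
    simp only [alternating, fireList] at hV ⊢
    by_cases ht : Even t <;>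
    · simp only [ht, Nat.even_add_one, ite_true, ite_false, not_true_eq_false,
        not_false_eq_true, id, Prod.ext_iff, Prod.fst_swap, Prod.snd_swap] at hV ⊢
      exact ⟨hV.2, hV.1⟩

theorem alternating_fireList_eq_of_cos (hij : i ≠ j) {m : ℕ} (hm : 3 ≤ m)
    (hM : E.M i j * E.M j i = 4 * cos (π / m) ^ 2) (hpi : 0 < p i) (hpj : 0 < p j) :
    E.Legal p (alternating m i j) ∧ E.Legal p (alternating m j i) ∧
      E.fireList p (alternating m i j) = E.fireList p (alternating m j i) := by
  have hm3 : (3 : ℝ) ≤ m := by exact_mod_cast hm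
  have hθ : 0 < π / m := by positivity
  have hθ' : π / m < π / 2 := div_lt_div_of_pos_left pi_pos (by norm_num) (by linarith)
  have hcos : 0 < cos (π / m) := cos_pos_of_mem_Ioo ⟨by linarith, hθ'⟩
  have hsin : 0 < sin (π / m) := sin_pos_of_pos_of_lt_pi hθ (by linarith)
  have h4 : E.M i j * E.M j i ≠ 4 := by
    rw [hM]; nlinarith [sin_sq_add_cos_sq (π / m)]
  have hu : 0 < -E.M i j := by nlinarith [E.offDiag_nonpos i j hij, E.offDiag_nonpos j i hij.symm]
  have hv : 0 < -E.M j i := by nlinarith [E.offDiag_nonpos i j hij, E.offDiag_nonpos j i hij.symm]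
  have hc : √(-E.M i j) * √(-E.M j i) = 2 * cos (π / m) := by
    rw [← Real.sqrt_mul hu.le, neg_mul_neg, hM,
      show 4 * cos (π / m) ^ 2 = (2 * cos (π / m)) ^ 2 by ring, Real.sqrt_sq (by positivity)]
  have hX : 0 < E.scaledVal p i j := mul_pos (Real.sqrt_pos.2 hu) hpi
  have hY : 0 < E.scaledVal p j i := mul_pos (Real.sqrt_pos.2 hv) hpj
  obtain ⟨hL₁, hV₁⟩ := E.legal_alternating_and_scaledVal_fireList _ m p i j hij hc
    fun k hk => dihedralStep_iterate_fst_pos hk hX hY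
  obtain ⟨hL₂, hV₂⟩ := E.legal_alternating_and_scaledVal_fireList _ m p j i hij.symm
    (by rwa [mul_comm]) fun k hk => dihedralStep_iterate_fst_pos hk hY hX
  rw [dihedralStep_iterate_self (by omega)] at hV₁ hV₂
  have key : E.scaledVal (E.fireList p (alternating m i j)) i j =
        E.scaledVal (E.fireList p (alternating m j i)) i j ∧
      E.scaledVal (E.fireList p (alternating m i j)) j i =
        E.scaledVal (E.fireList p (alternating m j i)) j i := by
    split_ifs at hV₁ hV₂ <;> simp only [id, Prod.swap, Prod.neg_mk, Prod.mk.injEq] at hV₁ hV₂ <;>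
      constructor <;> linarith
  refine ⟨hL₁, hL₂, E.fireList_eq_of_eq_on_edge h4 (fun _ => mem_alternating)
    (fun _ hx => (mem_alternating hx).symm) ?_ ?_⟩
  · exact mul_left_cancel₀ (Real.sqrt_pos.2 hu).ne' key.1
  · exact mul_left_cancel₀ (Real.sqrt_pos.2 hv).ne' key.2

theorem exists_alternating_fireList_eq {s : List ι} (hs : E.IsGameSeq p s) (hij : i ≠ j)
    (hpi : 0 < p i) (hpj : 0 < p j) :
    ∃ m, 1 ≤ m ∧ E.Legal p (alternating m i j) ∧ E.Legal p (alternating m j i) ∧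
      E.fireList p (alternating m i j) = E.fireList p (alternating m j i) := by
  by_cases hz : E.M i j = 0
  · have hz' : E.M j i = 0 := (E.zero_iff i j).1 hz
    refine ⟨2, by norm_num, ⟨hpi, by simpa [fire, hz], trivial⟩,
      ⟨hpj, by simpa [fire, hz'], trivial⟩, ?_⟩
    funext k
    simp only [alternating, fireList, fire, hz, hz']
    ring
  rcases E.prod_cond i j hij (mul_ne_zero hz ((E.zero_iff i j).not.1 hz)) with h4 | ⟨m, hm, hM⟩
  · exact absurd hs (E.not_isGameSeq_of_heavy hij h4 hpi.le hpj s)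
  · exact ⟨m, by omega, E.alternating_fireList_eq_of_cos hij hm hM hpi hpj⟩

/-- Eriksson's strong convergence theorem. -/
theorem exists_isGameSeq_append_of_legal :
    ∀ (n : ℕ) {p : ι → ℝ} {s t : List ι}, s.length = n → E.IsGameSeq p s → E.Legal p t →
      ∃ e, E.IsGameSeq p (t ++ e) ∧ (t ++ e).length = n
  | n, _, s, [], hn, hs, _ => ⟨s, hs, hn⟩
  | 0, _, [], _ :: _, _, hs, ht => absurd ht.1 (not_lt.2 (hs.2 _))
  | n + 1, p, i :: s, j :: t, hn, hs, ht => by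
    obtain ⟨hpi, hs⟩ := E.isGameSeq_cons.1 hs
    obtain ⟨hpj, ht⟩ := ht
    have hsn : s.length = n := by simpa using hn
    by_cases hji : j = i
    · subst hji
      obtain ⟨e, he, hlen⟩ := exists_isGameSeq_append_of_legal n hsn hs ht
      exact ⟨e, E.isGameSeq_cons.2 ⟨hpj, he⟩, by simpa using hlen⟩
    obtain ⟨_ | m, hm, hLi, hLj, heq⟩ :=
      E.exists_alternating_fireList_eq (E.isGameSeq_cons.2 ⟨hpi, hs⟩) (Ne.symm hji) hpi hpj
    · omega
    -- both sides of the polygon, after their first firing, complete to game sequences of length `n`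
    obtain ⟨e, he, hlen⟩ := exists_isGameSeq_append_of_legal n hsn hs hLi.2
    rw [isGameSeq_append] at he
    have heq' : E.fireList (E.fire p j) (alternating m i j) =
        E.fireList (E.fire p i) (alternating m j i) := heq.symm
    have he' : E.IsGameSeq (E.fire p j) (alternating m i j ++ e) := by
      rw [isGameSeq_append, heq']
      exact ⟨hLj.2, he.2⟩
    obtain ⟨e', he', hlen'⟩ := exists_isGameSeq_append_of_legal n (by simpa using hlen) he' ht
    exact ⟨e', E.isGameSeq_cons.2 ⟨hpj, he'⟩, by simpa using hlen'⟩

theorem length_le_of_isGameSeq_of_legal {s t : List ι} (hs : E.IsGameSeq p s)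
    (ht : E.Legal p t) : t.length ≤ s.length := by
  obtain ⟨e, -, he⟩ := E.exists_isGameSeq_append_of_legal _ rfl hs ht
  simp only [List.length_append] at he
  omega

theorem exists_isGameSeq_of_forall_legal_length_le :
    ∀ (N : ℕ) (p : ι → ℝ), (∀ t, E.Legal p t → t.length ≤ N) → ∃ s, E.IsGameSeq p s
  | N, p, hN => by
    by_cases hp : Terminal p
    · exact ⟨[], trivial, hp⟩
    obtain ⟨k, hk⟩ : ∃ k, 0 < p k := by simpa [Terminal] using hp
    cases N with
    | zero => exact absurd (hN [k] ⟨hk, trivial⟩) (by simp)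
    | succ N =>
      obtain ⟨s, hs⟩ := exists_isGameSeq_of_forall_legal_length_le N (E.fire p k)
        fun t ht => by simpa using hN (k :: t) ⟨hk, ht⟩
      exact ⟨k :: s, E.isGameSeq_cons.2 ⟨hk, hs⟩⟩

theorem exists_legal_pos_of_isPath (I : Finset ι) :
    ∀ {x y : ι} (q : E.graph.Walk x y), q.IsPath → y ∈ I → ∀ p : ι → ℝ, 0 < p x →
      (∀ k ∈ q.support.tail, 0 ≤ p k) →
      ∃ w, (∀ z ∈ w, z ∉ I) ∧ E.Legal p w ∧ ∃ k ∈ I, 0 < E.fireList p w k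
  | _, _, .nil, _, hy, _, hx, _ => ⟨[], by simp, trivial, _, hy, hx⟩
  | x, _, .cons (v := v) hxv q, hq, hy, p, hx, hnn => by
    by_cases hxI : x ∈ I
    · exact ⟨[], by simp, trivial, x, hxI, hx⟩
    rw [SimpleGraph.Walk.cons_isPath_iff] at hq
    simp only [SimpleGraph.Walk.support_cons, List.tail_cons] at hnn
    have hv : 0 < E.fire p x v := by
      have hM : E.M x v < 0 := lt_of_le_of_ne (E.offDiag_nonpos x v hxv.1) hxv.2
      simp only [fire]
      nlinarith [hnn v q.start_mem_support]
    have hnn' : ∀ k ∈ q.support.tail, 0 ≤ E.fire p x k := fun k hk =>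
      have hk := List.mem_of_mem_tail hk
      (hnn k hk).trans (E.le_fire hx.le fun h => hq.2 (h ▸ hk))
    obtain ⟨w, hwI, hw, hpos⟩ := exists_legal_pos_of_isPath I q hq.1 hy _ hv hnn'
    exact ⟨x :: w, by simpa [hxI] using hwI, ⟨hx, hw⟩, hpos⟩

theorem legal_restrict (I : Finset ι) (q : ι → ℝ) (w : List I) :
    (E.restrict I).Legal (fun k => q k) w ↔ E.Legal q (w.map Subtype.val) := by
  induction w generalizing q with
  | nil => exact Iff.rfl
  | cons x w ih => exact and_congr Iff.rfl (ih (E.fire q x))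

end EGCM

/-- **Lemma 2.7.** If a connected E-GCM graph is admissible, then any connected E-GCM
subgraph is also admissible. -/
theorem egcm_subgraph_admissible {ι : Type*} [Fintype ι] (E : EGCM ι)
    (hconn : E.graph.Connected) (hadm : E.Admissible)
    (I : Finset ι) (hconn' : (E.restrict I).graph.Connected) :
    (E.restrict I).Admissible := by
  classical
  obtain ⟨lam, hdom, hne, s, hs⟩ := hadm
  obtain ⟨x, hx⟩ : ∃ x, 0 < lam x := by
    obtain ⟨x, hx⟩ := Function.ne_iff.1 hne
    exact ⟨x, (hdom x).lt_of_ne' hx⟩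
  obtain ⟨⟨y, hy⟩⟩ := hconn'.nonempty
  obtain ⟨walk⟩ := hconn.preconnected x y
  obtain ⟨path, hpath⟩ := walk.toPath
  obtain ⟨w, hwI, hw, k, hk, hpos⟩ :=
    E.exists_legal_pos_of_isPath I path hpath hy lam hx fun k _ => hdom k
  set q := E.fireList lam w
  have hbound : ∀ t, (E.restrict I).Legal (fun k => q k) t → t.length ≤ s.length - w.length := by
    intro t ht
    have := E.length_le_of_isGameSeq_of_legal hs
      ((E.legal_append lam w _).2 ⟨hw, (E.legal_restrict I q t).1 ht⟩)
    simp only [List.length_append, List.length_map] at this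
    omega
  obtain ⟨t, ht⟩ := (E.restrict I).exists_isGameSeq_of_forall_legal_length_le _ _ hbound
  exact ⟨fun k => q k, fun k => (hdom k).trans (E.le_fireList hw fun h => hwI _ h k.2),
    Function.ne_iff.2 ⟨⟨k, hk⟩, hpos.ne'⟩, t, ht⟩
end
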